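/- Let R(τ) = (1/2)·log(G₁₂(τ)² − G₁₁(τ)²). Then, as τ → ∞, R(τ) − (1/2)·log(16·(8τ + log 16 − 1)/π⁴) → 0. -/

import Mathlib

open Real Filter Topology

/-- Complete elliptic integral of the first kind. -/
noncomputable def ellipticK (k : ℝ) : ℝ :=
  ∫ α in (0:ℝ)..(Real.pi / 2), 1 / Real.sqrt (1 - k ^ 2 * Real.sin α ^ 2)

/-- Complete elliptic integral of the second kind. -/
noncomputable def ellipticE (k : ℝ) : ℝ :=
  ∫ α in (0:ℝ)..(Real.pi / 2), Real.sqrt (1 - k ^ 2 * Real.sin α ^ 2)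

/-- κ(τ) = √(1 − e^{−8τ}). -/
noncomputable def kappa (τ : ℝ) : ℝ := Real.sqrt (1 - Real.exp (-8 * τ))

/-- κ̃(τ) = e^{−4τ}. -/
noncomputable def kappaT (τ : ℝ) : ℝ := Real.exp (-4 * τ)

/-- Diagonal entry of the reduced covariance matrix of the resonant mode. -/
noncomputable def G₁₁ (τ : ℝ) : ℝ :=
  -(4 / (Real.pi ^ 2 * kappa τ ^ 2)) *
    ((ellipticE (kappa τ) - kappaT τ ^ 2 * ellipticK (kappa τ)) *
      (ellipticK (kappa τ) - ellipticE (kappa τ)))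

/-- Off-diagonal entry of the reduced covariance matrix of the resonant mode. -/
noncomputable def G₁₂ (τ : ℝ) : ℝ :=
  (4 / Real.pi ^ 2) * (ellipticE (kappa τ) * ellipticK (kappa τ))

/-!
Write `c = κ̃ = e^{-4τ}`, so that `κ = √(1 - c²)`, and `E = E(κ)`, `K = K(κ)`. Then
`G₁₂ ∓ G₁₁ = 4 P∓ / (π² (1 - c²))` with `P₋ = covMinus c = 2EK - E² - c²K²` and
`P₊ = covPlus c = E² - 2c²EK + c²K²`. As `c → 0⁺` we have `1 ≤ E ≤ 1 + c` and `K + log c → log 4`,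
hence `cK → 0`, `P₊ → 1` and `P₋ = 2K - 1 + o(1) = 8τ + log 16 - 1 + o(1)`; the two
logarithms therefore differ by `o(1)`.

For `K`, reflect `β ↦ π/2 - β` to get `K = ∫ (sin²β + c² cos²β)^{-1/2}` and subtract
`cos β / √(sin²β + c²)`, whose integral is `arsinh (1/c) = -log c + log 2 + o(1)`. The
difference is bounded by `2` and tends to `sin β / (1 + cos β)`, whose integral is `log 2`,
so dominated convergence gives the remaining `log 2`.
-/

open intervalIntegral

lemma tendsto_div_of_tendsto_sub {α : Type*} {l : Filter α} {f g : α → ℝ}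
    (hfg : Tendsto (fun x => f x - g x) l (𝓝 0)) (hg : Tendsto g l atTop) :
    Tendsto (fun x => f x / g x) l (𝓝 1) := by
  have h := (hfg.mul hg.inv_tendsto_atTop).add_const 1
  rw [zero_mul, zero_add] at h
  simp only [Pi.inv_apply] at h
  refine h.congr' ?_
  filter_upwards [hg.eventually_ne_atTop 0] with x hx
  field_simp
  ring

noncomputable def complEllipticK (c : ℝ) : ℝ := ellipticK √(1 - c ^ 2)

noncomputable def complEllipticE (c : ℝ) : ℝ := ellipticE √(1 - c ^ 2)

lemma one_sub_sqrt_one_sub_sq_mul_sin_sq {c : ℝ} (hc : |c| ≤ 1) (α : ℝ) :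
    1 - √(1 - c ^ 2) ^ 2 * sin α ^ 2 = cos α ^ 2 + c ^ 2 * sin α ^ 2 := by
  rw [sq_sqrt (by nlinarith [sq_abs c, abs_nonneg c])]
  linear_combination -(sin_sq_add_cos_sq α)

lemma one_le_complEllipticE {c : ℝ} (hc : |c| ≤ 1) : 1 ≤ complEllipticE c := by
  calc (1 : ℝ) = ∫ α in (0:ℝ)..π / 2, cos α := by simp
    _ ≤ complEllipticE c := by
      refine integral_mono_on (by positivity) (continuous_cos.intervalIntegrable _ _)
        (Continuous.intervalIntegrable (by fun_prop) _ _) fun α _ => ?_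
      rw [one_sub_sqrt_one_sub_sq_mul_sin_sq hc]
      exact le_sqrt_of_sq_le (le_add_of_nonneg_right (by positivity))

lemma complEllipticE_le {c : ℝ} (hc0 : 0 ≤ c) (hc1 : c ≤ 1) : complEllipticE c ≤ 1 + c := by
  have hc : |c| ≤ 1 := abs_le.2 ⟨by linarith, hc1⟩
  calc complEllipticE c ≤ ∫ α in (0:ℝ)..π / 2, (cos α + c * sin α) := by
        refine integral_mono_on (by positivity) (Continuous.intervalIntegrable (by fun_prop) _ _)
          (Continuous.intervalIntegrable (by fun_prop) _ _) fun α hα => ?_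
        have hcos : 0 ≤ cos α := cos_nonneg_of_mem_Icc ⟨by linarith [pi_pos, hα.1], hα.2⟩
        have hsin : 0 ≤ sin α := sin_nonneg_of_nonneg_of_le_pi hα.1 (by linarith [pi_pos, hα.2])
        rw [one_sub_sqrt_one_sub_sq_mul_sin_sq hc]
        exact sqrt_le_iff.2 ⟨by positivity, by nlinarith [mul_nonneg (mul_nonneg hc0 hsin) hcos]⟩
    _ = 1 + c := by
        rw [integral_add (continuous_cos.intervalIntegrable _ _)
          (Continuous.intervalIntegrable (by fun_prop) _ _), integral_const_mul]
        simp

lemma tendsto_complEllipticE : Tendsto complEllipticE (𝓝[>] 0) (𝓝 1) := by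
  have hup : Tendsto (fun c : ℝ => 1 + c) (𝓝[>] 0) (𝓝 1) := by
    simpa using ((tendsto_const_nhds (x := (1:ℝ))).add tendsto_id).mono_left
      (nhdsWithin_le_nhds (a := (0:ℝ)))
  refine tendsto_of_tendsto_of_tendsto_of_le_of_le' tendsto_const_nhds hup ?_ ?_ <;>
    filter_upwards [Ioc_mem_nhdsGT one_pos] with c hc
  · exact one_le_complEllipticE (abs_le.2 ⟨by linarith [hc.1], hc.2⟩)
  · exact complEllipticE_le hc.1.le hc.2

lemma complEllipticK_eq_integral {c : ℝ} (hc : |c| ≤ 1) :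
    complEllipticK c = ∫ β in (0:ℝ)..π / 2, (√(sin β ^ 2 + c ^ 2 * cos β ^ 2))⁻¹ := by
  have hreflect := integral_comp_sub_left
    (fun β => (√(sin β ^ 2 + c ^ 2 * cos β ^ 2))⁻¹) (a := 0) (b := π / 2) (π / 2)
  simp only [sub_self, sub_zero, sin_pi_div_two_sub, cos_pi_div_two_sub] at hreflect
  rw [← hreflect, complEllipticK, ellipticK]
  refine integral_congr fun α _ => ?_
  simp only [one_div, one_sub_sqrt_one_sub_sq_mul_sin_sq hc]

lemma continuous_cos_div_sqrt_sin_sq_add_sq {c : ℝ} (hc : c ≠ 0) :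
    Continuous fun β => cos β / √(sin β ^ 2 + c ^ 2) :=
  continuous_cos.div (by fun_prop) fun β => (sqrt_pos.2 (by positivity)).ne'

lemma integral_cos_div_sqrt_sin_sq_add_sq {c : ℝ} (hc : 0 < c) (a b : ℝ) :
    ∫ β in a..b, cos β / √(sin β ^ 2 + c ^ 2) = arsinh (sin b / c) - arsinh (sin a / c) := by
  have hderiv : ∀ β, HasDerivAt (fun β => arsinh (sin β / c)) (cos β / √(sin β ^ 2 + c ^ 2)) β := by
    intro β
    have hsqrt : √(1 + (sin β / c) ^ 2) = √(sin β ^ 2 + c ^ 2) / c := by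
      rw [eq_div_iff hc.ne', ← sqrt_sq hc.le, ← sqrt_mul (by positivity), sqrt_sq hc.le]
      congr 1
      field_simp
      ring
    refine ((hasDerivAt_arsinh _).comp β ((hasDerivAt_sin β).div_const c)).congr_deriv ?_
    rw [hsqrt]
    field_simp
  exact integral_eq_sub_of_hasDerivAt (fun β _ => hderiv β)
    ((continuous_cos_div_sqrt_sin_sq_add_sq hc.ne').intervalIntegrable _ _)

lemma arsinh_inv_add_log {c : ℝ} (hc : 0 < c) : arsinh c⁻¹ + log c = log (1 + √(1 + c ^ 2)) := by
  have hsqrt : √(1 + c⁻¹ ^ 2) = √(1 + c ^ 2) / c := by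
    rw [eq_div_iff hc.ne', ← sqrt_sq hc.le, ← sqrt_mul (by positivity), sqrt_sq hc.le]
    congr 1
    field_simp
    ring
  rw [arsinh, ← log_mul (add_pos_of_pos_of_nonneg (inv_pos.2 hc) (sqrt_nonneg _)).ne' hc.ne',
    hsqrt]
  field_simp

lemma tendsto_arsinh_inv_add_log : Tendsto (fun c => arsinh c⁻¹ + log c) (𝓝[>] 0) (𝓝 (log 2)) := by
  have hcont : ContinuousAt (fun c : ℝ => log (1 + √(1 + c ^ 2))) 0 :=
    (continuousAt_const.add (by fun_prop)).log (by norm_num)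
  have hlim := hcont.tendsto.mono_left (nhdsWithin_le_nhds (s := Set.Ioi 0))
  norm_num at hlim
  refine hlim.congr' ?_
  filter_upwards [self_mem_nhdsWithin] with c hc
  exact (arsinh_inv_add_log hc).symm

lemma integral_sin_div_one_add_cos : ∫ β in (0:ℝ)..π / 2, sin β / (1 + cos β) = log 2 := by
  have hpos : ∀ β ∈ Set.uIcc 0 (π / 2), 0 < 1 + cos β := fun β hβ => by
    rw [Set.uIcc_of_le (by positivity)] at hβ
    linarith [cos_nonneg_of_mem_Icc ⟨by linarith [pi_pos, hβ.1], hβ.2⟩]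
  have hderiv : ∀ β ∈ Set.uIcc 0 (π / 2),
      HasDerivAt (fun β => -log (1 + cos β)) (sin β / (1 + cos β)) β := fun β hβ =>
    (((hasDerivAt_cos β).const_add 1).log (hpos β hβ).ne').neg.congr_deriv (by ring)
  have hcont : ContinuousOn (fun β => sin β / (1 + cos β)) (Set.uIcc 0 (π / 2)) :=
    continuous_sin.continuousOn.div (by fun_prop) fun β hβ => (hpos β hβ).ne'
  rw [integral_eq_sub_of_hasDerivAt hderiv hcont.intervalIntegrable]
  norm_num

lemma sq_le_sin_sq_add_sq_mul_cos_sq {c : ℝ} (hc : c ^ 2 ≤ 1) (β : ℝ) :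
    c ^ 2 ≤ sin β ^ 2 + c ^ 2 * cos β ^ 2 := by
  nlinarith [sin_sq_add_cos_sq β, sq_nonneg (sin β)]

lemma sin_sq_add_sq_mul_cos_sq_pos {c : ℝ} (hc : c ≠ 0) (β : ℝ) :
    0 < sin β ^ 2 + c ^ 2 * cos β ^ 2 := by
  rcases le_total (c ^ 2) 1 with h | h
  · exact (by positivity : 0 < c ^ 2).trans_le (sq_le_sin_sq_add_sq_mul_cos_sq h β)
  · nlinarith [sin_sq_add_cos_sq β, mul_nonneg (sub_nonneg.2 h) (sq_nonneg (cos β))]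

lemma continuous_inv_sqrt_sin_sq_add_sq_mul_cos_sq {c : ℝ} (hc : c ≠ 0) :
    Continuous fun β => (√(sin β ^ 2 + c ^ 2 * cos β ^ 2))⁻¹ :=
  Continuous.inv₀ (by fun_prop) fun β => (sqrt_pos.2 (sin_sq_add_sq_mul_cos_sq_pos hc β)).ne'

lemma abs_inv_sqrt_sub_cos_div_sqrt_le {c β : ℝ} (hc0 : 0 < c) (hc1 : c ≤ 1)
    (hsin : 0 ≤ sin β) (hcos : 0 ≤ cos β) :
    |(√(sin β ^ 2 + c ^ 2 * cos β ^ 2))⁻¹ - cos β / √(sin β ^ 2 + c ^ 2)| ≤ 2 := by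
  set s := sin β
  set t := cos β
  set A := √(s ^ 2 + c ^ 2 * t ^ 2)
  set D := √(s ^ 2 + c ^ 2)
  have hst : s ^ 2 + t ^ 2 = 1 := sin_sq_add_cos_sq β
  have hcA : c ≤ A := le_sqrt_of_sq_le (sq_le_sin_sq_add_sq_mul_cos_sq (by nlinarith) β)
  have hsD : s ≤ D := le_sqrt_of_sq_le (by nlinarith)
  have hAD : A ≤ D := sqrt_le_sqrt (by nlinarith)
  have hA0 : 0 < A := hc0.trans_le hcA
  have hD0 : 0 < D := hA0.trans_le hAD
  have hgap : D - A ≤ A * D := by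
    have hprod : (D - A) * (D + A) = c ^ 2 * s ^ 2 := by
      linear_combination sq_sqrt (by positivity : 0 ≤ s ^ 2 + c ^ 2) -
        sq_sqrt (by positivity : 0 ≤ s ^ 2 + c ^ 2 * t ^ 2) - c ^ 2 * hst
    refine le_of_mul_le_mul_right (hprod.le.trans ?_) (by linarith : 0 < D + A)
    have hcs : c * s ≤ A * D := mul_le_mul hcA hsD hsin hA0.le
    have h1 : c * s * (D + A) ≤ A * D * (D + A) := mul_le_mul_of_nonneg_right hcs (by linarith)
    have h2 : c * s * s ≤ c * s * (D + A) :=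
      mul_le_mul_of_nonneg_left (by linarith) (by positivity)
    nlinarith [mul_le_mul_of_nonneg_right hc1 (by positivity : 0 ≤ c * s * s)]
  have hcos_gap : (1 - t) * A ≤ A * D := by
    have hts : 1 - t ≤ s := by nlinarith
    nlinarith
  rw [abs_le, ← one_div, div_sub_div _ _ hA0.ne' hD0.ne', le_div_iff₀ (mul_pos hA0 hD0),
    div_le_iff₀ (mul_pos hA0 hD0)]
  constructor <;> nlinarith

lemma tendsto_integral_inv_sqrt_sub_cos_div_sqrt :
    Tendsto (fun c => ∫ β in (0:ℝ)..π / 2,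
      ((√(sin β ^ 2 + c ^ 2 * cos β ^ 2))⁻¹ - cos β / √(sin β ^ 2 + c ^ 2)))
      (𝓝[>] 0) (𝓝 (log 2)) := by
  rw [← integral_sin_div_one_add_cos]
  refine tendsto_integral_filter_of_dominated_convergence (fun _ => 2) ?_ ?_
    intervalIntegrable_const ?_
  · filter_upwards [self_mem_nhdsWithin] with c (hc : 0 < c)
    exact ((continuous_inv_sqrt_sin_sq_add_sq_mul_cos_sq hc.ne').sub
      (continuous_cos_div_sqrt_sin_sq_add_sq hc.ne')).aestronglyMeasurable
  · filter_upwards [Ioc_mem_nhdsGT one_pos] with c hc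
    refine Filter.Eventually.of_forall fun β hβ => ?_
    rw [Set.uIoc_of_le (by positivity)] at hβ
    exact abs_inv_sqrt_sub_cos_div_sqrt_le hc.1 hc.2
      (sin_nonneg_of_nonneg_of_le_pi hβ.1.le (by linarith [pi_pos, hβ.2]))
      (cos_nonneg_of_mem_Icc ⟨by linarith [pi_pos, hβ.1], hβ.2⟩)
  · refine Filter.Eventually.of_forall fun β hβ => ?_
    rw [Set.uIoc_of_le (by positivity)] at hβ
    have hsin : 0 < sin β := sin_pos_of_pos_of_lt_pi hβ.1 (by linarith [pi_pos, hβ.2])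
    have hcont : ContinuousAt (fun c : ℝ =>
        (√(sin β ^ 2 + c ^ 2 * cos β ^ 2))⁻¹ - cos β / √(sin β ^ 2 + c ^ 2)) 0 := by
      have hsqrt : √(sin β ^ 2 + 0 ^ 2 * cos β ^ 2) ≠ 0 := by
        simp [sqrt_sq hsin.le, hsin.ne']
      have hsqrt' : √(sin β ^ 2 + 0 ^ 2) ≠ 0 := by
        simp [sqrt_sq hsin.le, hsin.ne']
      fun_prop (disch := assumption)
    have hlimit : (√(sin β ^ 2 + 0 ^ 2 * cos β ^ 2))⁻¹ - cos β / √(sin β ^ 2 + 0 ^ 2)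
        = sin β / (1 + cos β) := by
      have h1 : 1 + cos β ≠ 0 := by nlinarith [neg_one_le_cos β, sin_sq_add_cos_sq β]
      simp only [zero_pow two_ne_zero, zero_mul, add_zero, sqrt_sq hsin.le]
      field_simp
      linear_combination -(sin_sq_add_cos_sq β)
    exact hlimit ▸ hcont.tendsto.mono_left nhdsWithin_le_nhds

lemma tendsto_complEllipticK_add_log :
    Tendsto (fun c => complEllipticK c + log c) (𝓝[>] 0) (𝓝 (log 4)) := by
  have hlog4 : log 4 = log 2 + log 2 := by
    rw [← log_mul two_ne_zero two_ne_zero]; norm_num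
  rw [hlog4]
  refine (tendsto_integral_inv_sqrt_sub_cos_div_sqrt.add tendsto_arsinh_inv_add_log).congr' ?_
  filter_upwards [Ioc_mem_nhdsGT one_pos] with c hc
  rw [integral_sub
    ((continuous_inv_sqrt_sin_sq_add_sq_mul_cos_sq hc.1.ne').intervalIntegrable _ _)
    ((continuous_cos_div_sqrt_sin_sq_add_sq hc.1.ne').intervalIntegrable _ _),
    integral_cos_div_sqrt_sin_sq_add_sq hc.1,
    complEllipticK_eq_integral (abs_le.2 ⟨by linarith [hc.1], hc.2⟩)]
  simp [one_div]
  ring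

lemma tendsto_mul_complEllipticK :
    Tendsto (fun c => c * complEllipticK c) (𝓝[>] 0) (𝓝 0) := by
  have hmul : Tendsto (fun c : ℝ => c * (complEllipticK c + log c)) (𝓝[>] 0) (𝓝 0) := by
    simpa using (tendsto_nhdsWithin_of_tendsto_nhds tendsto_id).mul tendsto_complEllipticK_add_log
  have hmul_log : Tendsto (fun c : ℝ => c * log c) (𝓝[>] 0) (𝓝 0) := by
    simpa using continuous_mul_log.tendsto 0 |>.mono_left nhdsWithin_le_nhds
  simpa [mul_add] using hmul.sub hmul_log

lemma tendsto_sub_one_mul_complEllipticK :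
    Tendsto (fun c => (complEllipticE c - 1) * complEllipticK c) (𝓝[>] 0) (𝓝 0) := by
  refine squeeze_zero_norm' ?_ (by simpa using tendsto_mul_complEllipticK.norm)
  filter_upwards [Ioc_mem_nhdsGT one_pos] with c hc
  have hE := complEllipticE_le hc.1.le hc.2
  have hE' := one_le_complEllipticE (abs_le.2 ⟨by linarith [hc.1], hc.2⟩)
  rw [norm_mul, norm_of_nonneg (by linarith), norm_eq_abs, abs_of_pos hc.1]
  gcongr
  linarith

noncomputable def covMinus (c : ℝ) : ℝ :=
  2 * complEllipticE c * complEllipticK c - complEllipticE c ^ 2 - c ^ 2 * complEllipticK c ^ 2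

noncomputable def covPlus (c : ℝ) : ℝ :=
  complEllipticE c ^ 2 - 2 * c ^ 2 * complEllipticE c * complEllipticK c +
    c ^ 2 * complEllipticK c ^ 2

lemma tendsto_covPlus : Tendsto covPlus (𝓝[>] 0) (𝓝 1) := by
  have hc : Tendsto (fun c : ℝ => c) (𝓝[>] 0) (𝓝 0) :=
    tendsto_nhdsWithin_of_tendsto_nhds tendsto_id
  have h := (tendsto_complEllipticE.pow 2).sub
    (((hc.const_mul 2).mul tendsto_complEllipticE).mul tendsto_mul_complEllipticK)
    |>.add (tendsto_mul_complEllipticK.pow 2)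
  norm_num at h
  refine h.congr fun c => ?_
  rw [covPlus]
  ring

lemma tendsto_covMinus_sub_log :
    Tendsto (fun c => covMinus c - (log 16 - 2 * log c - 1)) (𝓝[>] 0) (𝓝 0) := by
  have hlog16 : log 16 = 2 * log 4 := by
    rw [show (16 : ℝ) = 4 ^ 2 by norm_num, log_pow]; norm_num
  have h := ((tendsto_sub_one_mul_complEllipticK.const_mul 2).add
    (tendsto_complEllipticK_add_log.const_mul 2)).sub
    ((tendsto_complEllipticE.pow 2).add (tendsto_mul_complEllipticK.pow 2))
  norm_num at h
  have h' := h.sub_const (2 * log 4 - 1)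
  rw [sub_self] at h'
  refine h'.congr fun c => ?_
  rw [covMinus, hlog16]
  ring

lemma kappaT_sq (τ : ℝ) : kappaT τ ^ 2 = exp (-8 * τ) := by
  rw [kappaT, ← exp_nat_mul]; ring_nf

lemma kappa_eq_sqrt (τ : ℝ) : kappa τ = √(1 - kappaT τ ^ 2) := by
  rw [kappa, kappaT_sq]

lemma one_sub_kappaT_sq_pos {τ : ℝ} (hτ : 0 < τ) : 0 < 1 - kappaT τ ^ 2 := by
  rw [kappaT_sq, sub_pos]
  exact exp_lt_one_iff.2 (by linarith)

lemma tendsto_kappaT_atTop : Tendsto kappaT atTop (𝓝[>] 0) :=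
  tendsto_nhdsWithin_iff.2 ⟨tendsto_exp_atBot.comp
    (tendsto_id.const_mul_atTop_of_neg (by norm_num)), .of_forall fun τ => exp_pos _⟩

lemma G₁₂_sub_G₁₁ {τ : ℝ} (hτ : 0 < τ) :
    G₁₂ τ - G₁₁ τ = 4 / (π ^ 2 * (1 - kappaT τ ^ 2)) * covMinus (kappaT τ) := by
  have hk := one_sub_kappaT_sq_pos hτ
  rw [G₁₂, G₁₁, covMinus, complEllipticE, complEllipticK, kappa_eq_sqrt, sq_sqrt hk.le]
  field_simp
  ring

lemma G₁₂_add_G₁₁ {τ : ℝ} (hτ : 0 < τ) :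
    G₁₂ τ + G₁₁ τ = 4 / (π ^ 2 * (1 - kappaT τ ^ 2)) * covPlus (kappaT τ) := by
  have hk := one_sub_kappaT_sq_pos hτ
  rw [G₁₂, G₁₁, covPlus, complEllipticE, complEllipticK, kappa_eq_sqrt, sq_sqrt hk.le]
  field_simp
  ring

lemma G₁₂_sq_sub_G₁₁_sq {τ : ℝ} (hτ : 0 < τ) :
    G₁₂ τ ^ 2 - G₁₁ τ ^ 2 =
      (4 / (π ^ 2 * (1 - kappaT τ ^ 2))) ^ 2 * covMinus (kappaT τ) * covPlus (kappaT τ) := by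
  rw [sq_sub_sq, G₁₂_add_G₁₁ hτ, G₁₂_sub_G₁₁ hτ]
  ring

lemma tendsto_covMinus_kappaT_div :
    Tendsto (fun τ => covMinus (kappaT τ) / (8 * τ + log 16 - 1)) atTop (𝓝 1) := by
  have hD : Tendsto (fun τ : ℝ => 8 * τ + log 16 - 1) atTop atTop :=
    (tendsto_atTop_add_const_right _ (log 16 - 1)
      (tendsto_id.const_mul_atTop (by norm_num : (0:ℝ) < 8))).congr fun τ => by
        simp only [id]; ring
  refine tendsto_div_of_tendsto_sub ((tendsto_covMinus_sub_log.comp tendsto_kappaT_atTop).congr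
    fun τ => ?_) hD
  simp only [Function.comp_apply, kappaT, log_exp]
  ring

lemma tendsto_covPlus_kappaT_div :
    Tendsto (fun τ => covPlus (kappaT τ) / (1 - kappaT τ ^ 2) ^ 2) atTop (𝓝 1) := by
  have hk : Tendsto (fun τ => (1 - kappaT τ ^ 2) ^ 2) atTop (𝓝 1) := by
    simpa using ((tendsto_nhds_of_tendsto_nhdsWithin tendsto_kappaT_atTop).pow 2).const_sub 1
      |>.pow 2
  have h := (tendsto_covPlus.comp tendsto_kappaT_atTop).div hk one_ne_zero
  rwa [div_one] at h

/-- Asymptotics of the Rényi entropy R(τ) = (1/2)·log(G₁₂² − G₁₁²). -/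
theorem stmt_7 :
    Tendsto (fun τ => (1 / 2) * Real.log (G₁₂ τ ^ 2 - G₁₁ τ ^ 2) -
      (1 / 2) * Real.log (16 * (8 * τ + Real.log 16 - 1) / Real.pi ^ 4)) atTop (𝓝 0) := by
  have hratio := tendsto_covMinus_kappaT_div.mul tendsto_covPlus_kappaT_div
  rw [one_mul] at hratio
  have hlog := ((continuousAt_log one_ne_zero).tendsto.comp hratio).const_mul (1 / 2)
  rw [log_one, mul_zero] at hlog
  refine hlog.congr' ?_
  filter_upwards [eventually_gt_atTop 0, hratio.eventually_ne one_ne_zero] with τ hτ hr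
  have hk := one_sub_kappaT_sq_pos hτ
  have hD : 0 < 8 * τ + log 16 - 1 := by
    have : 1 < log 16 := by
      rw [lt_log_iff_exp_lt (by norm_num)]
      exact exp_one_lt_d9.trans (by norm_num)
    linarith
  have hG : G₁₂ τ ^ 2 - G₁₁ τ ^ 2 = 16 * (8 * τ + log 16 - 1) / π ^ 4 *
      (covMinus (kappaT τ) / (8 * τ + log 16 - 1) *
        (covPlus (kappaT τ) / (1 - kappaT τ ^ 2) ^ 2)) := by
    rw [G₁₂_sq_sub_G₁₁_sq hτ]
    field_simp
    ring
  rw [Function.comp_apply, hG, log_mul (by positivity) hr]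
  ring
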